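/- Let a, b, Γ, β > 0 and μ ∈ (4,6). For each c > 0 define g_c : (0,∞) → ℝ by g_c(r) = a r² + b r⁴ − Γ c^β r^μ. Then: (1) for each c > 0 the function g_c has a unique critical point R_c on (0,∞), and R_c is its strict global maximizer; (2) there exists c_{**} > 0 such that for every c ∈ (0, c_{**}) one has g_c(R_c) > 3c²/2, the equation g_c(r) = 3c²/2 has exactly two solutions R₀ < R₁ in (0,∞), these satisfy 0 < R₀ < R_c < R₁, and g_c(r) > 3c²/2 holds if and only if r ∈ (R₀, R₁). -/

import Mathlib

open Set Real

private lemma key_g (a b K μ : ℝ) (ha : 0 < a) (hb : 0 < b) (hK : 0 < K)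
    (hμ4 : 4 < μ) (hμ6 : μ < 6) :
    ∃ R : ℝ, 0 < R ∧
      (∀ x : ℝ, 0 < x →
        (deriv (fun r : ℝ => a * r ^ 2 + b * r ^ 4 - K * r ^ μ) x = 0 ↔ x = R)) ∧
      StrictMonoOn (fun r : ℝ => a * r ^ 2 + b * r ^ 4 - K * r ^ μ) (Set.Ioc 0 R) ∧
      StrictAntiOn (fun r : ℝ => a * r ^ 2 + b * r ^ 4 - K * r ^ μ) (Set.Ici R) := by
  set F : ℝ → ℝ := fun r => a * r ^ 2 + b * r ^ 4 - K * r ^ μ with hFdef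
  have hμ1 : (1:ℝ) ≤ μ := by linarith
  have hF : ∀ x : ℝ, HasDerivAt F (2*a*x + 4*b*x^3 - K*μ*x^(μ-1)) x := by
    intro x
    have h1 : HasDerivAt (fun r : ℝ => r ^ μ) (μ * x ^ (μ-1)) x :=
      Real.hasDerivAt_rpow_const (Or.inr hμ1)
    have h2 : HasDerivAt (fun r : ℝ => a * r ^ 2 + b * r ^ 4 - K * r ^ μ)
        (a * (2 * x ^ 1) + b * (4 * x ^ 3) - K * (μ * x ^ (μ-1))) x :=
      (((hasDerivAt_pow 2 x).const_mul a).add ((hasDerivAt_pow 4 x).const_mul b)).sub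
        (h1.const_mul K)
    rw [show 2*a*x + 4*b*x^3 - K*μ*x^(μ-1)
        = a * (2 * x ^ 1) + b * (4 * x ^ 3) - K * (μ * x ^ (μ-1)) from by ring]
    exact h2
  have hFderiv : ∀ x : ℝ, deriv F x = 2*a*x + 4*b*x^3 - K*μ*x^(μ-1) := fun x => (hF x).deriv
  have hFdiff : Differentiable ℝ F := fun x => (hF x).differentiableAt
  have hFcont : Continuous F := hFdiff.continuous
  set M : ℝ := K * μ with hMdef
  have hM : 0 < M := by positivity
  -- the auxiliary function h
  set h : ℝ → ℝ := fun r => 2*a*r^(2-μ) + 4*b*r^(4-μ) with hhdef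
  have hAnti : StrictAntiOn h (Set.Ioi 0) := by
    intro x hx y hy hxy
    have h1 : y ^ (2-μ) < x ^ (2-μ) := Real.rpow_lt_rpow_of_neg hx hxy (by linarith)
    have h2 : y ^ (4-μ) < x ^ (4-μ) := Real.rpow_lt_rpow_of_neg hx hxy (by linarith)
    simp only [hhdef]
    nlinarith
  -- identity relating deriv F and h
  have hid : ∀ x : ℝ, 0 < x → deriv F x = (h x - M) * x^(μ-1) := by
    intro x hx
    have e1 : x^(2-μ) * x^(μ-1) = x := by
      rw [← Real.rpow_add hx, show (2-μ)+(μ-1) = 1 by ring, Real.rpow_one]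
    have e2 : x^(4-μ) * x^(μ-1) = x^3 := by
      rw [← Real.rpow_add hx, show (4-μ)+(μ-1) = 3 by ring]
      exact_mod_cast Real.rpow_natCast x 3
    have : (h x - M) * x^(μ-1)
        = 2*a*(x^(2-μ)*x^(μ-1)) + 4*b*(x^(4-μ)*x^(μ-1)) - M*x^(μ-1) := by
      simp only [hhdef]; ring
    rw [hFderiv, this, e1, e2]
  -- existence of R with h R = M
  have hμ2 : (0:ℝ) < μ - 2 := by linarith
  set x₀ : ℝ := (2*a/M) ^ (μ-2)⁻¹ with hx₀def
  have hx₀pos : 0 < x₀ := Real.rpow_pos_of_pos (by positivity) _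
  have hhx₀ : M < h x₀ := by
    have e : x₀ ^ (2-μ) = M / (2*a) := by
      rw [show (2-μ) = -(μ-2) by ring, Real.rpow_neg hx₀pos.le, hx₀def,
        Real.rpow_inv_rpow (by positivity) hμ2.ne']
      rw [inv_div]
    have h2 : 0 < 4*b*x₀^(4-μ) := by positivity
    simp only [hhdef, e]
    have : 2*a*(M/(2*a)) = M := by field_simp
    nlinarith
  have hμ4' : (0:ℝ) < μ - 4 := by linarith
  set t : ℝ := ((2*a+4*b)/M) ^ (μ-4)⁻¹ with htdef
  have ht0 : 0 ≤ t := Real.rpow_nonneg (by positivity) _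
  set x₁ : ℝ := max (max 1 (x₀+1)) (t+1) with hx₁def
  have hx₁1 : (1:ℝ) ≤ x₁ := le_trans (le_max_left _ _) (le_max_left _ _)
  have hx₁0 : 0 < x₁ := lt_of_lt_of_le one_pos hx₁1
  have hx₀x₁ : x₀ < x₁ := by
    have := le_trans (le_max_right 1 (x₀+1)) (le_max_left _ _ : max 1 (x₀+1) ≤ x₁)
    linarith
  have hhx₁ : h x₁ < M := by
    have htx : t < x₁ := lt_of_lt_of_le (by linarith) (le_max_right _ _)
    have h1 : t ^ (μ-4) < x₁ ^ (μ-4) := Real.rpow_lt_rpow ht0 htx hμ4'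
    have h2 : t ^ (μ-4) = (2*a+4*b)/M := by
      rw [htdef, Real.rpow_inv_rpow (by positivity) hμ4'.ne']
    have h3 : (2*a+4*b)/M < x₁ ^ (μ-4) := h2 ▸ h1
    have hx₁μ : 0 < x₁ ^ (μ-4) := Real.rpow_pos_of_pos hx₁0 _
    have h4 : x₁ ^ (2-μ) ≤ x₁ ^ (4-μ) :=
      Real.rpow_le_rpow_of_exponent_le hx₁1 (by linarith)
    have h5 : x₁ ^ (4-μ) = (x₁ ^ (μ-4))⁻¹ := by
      rw [show (4-μ) = -(μ-4) by ring, Real.rpow_neg hx₁0.le]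
    have h6 : (2*a+4*b) * x₁ ^ (4-μ) < M := by
      rw [h5]
      rw [div_lt_iff₀ hM] at h3
      rw [mul_inv_lt_iff₀ hx₁μ]
      linarith
    simp only [hhdef]
    nlinarith
  have hhcont : ContinuousOn h (Icc x₀ x₁) := by
    intro x hx
    have hx0 : x ≠ 0 := (lt_of_lt_of_le hx₀pos hx.1).ne'
    have c1 : ContinuousAt h x := by
      simp only [hhdef]
      exact ((Real.continuousAt_rpow_const x (2-μ) (Or.inl hx0)).const_mul (2*a)).add
        ((Real.continuousAt_rpow_const x (4-μ) (Or.inl hx0)).const_mul (4*b))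
    exact c1.continuousWithinAt
  obtain ⟨R, hRmem, hhR⟩ : ∃ R ∈ Ioo x₀ x₁, h R = M := by
    have := intermediate_value_Ioo' hx₀x₁.le hhcont (a := x₀)
    have hMmem : M ∈ Ioo (h x₁) (h x₀) := ⟨hhx₁, hhx₀⟩
    obtain ⟨R, hR, hhR⟩ := this hMmem
    exact ⟨R, hR, hhR⟩
  have hRpos : 0 < R := lt_trans hx₀pos hRmem.1
  -- critical point characterization
  have hderiv_iff : ∀ x : ℝ, 0 < x → (deriv F x = 0 ↔ x = R) := by
    intro x hx
    rw [hid x hx]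
    have hxμ : (0:ℝ) < x ^ (μ-1) := Real.rpow_pos_of_pos hx _
    constructor
    · intro h0
      have : h x - M = 0 := by
        rcases mul_eq_zero.mp h0 with h' | h'
        · exact h'
        · exact absurd h' hxμ.ne'
      have hx' : h x = h R := by rw [hhR]; linarith
      exact hAnti.injOn hx hRpos hx'
    · intro h'; subst h'; rw [hhR]; ring
  -- sign of deriv
  have hpos : ∀ x ∈ Ioo (0:ℝ) R, 0 < deriv F x := by
    intro x hx
    rw [hid x hx.1]
    have h1 : h R < h x := hAnti hx.1 hRpos hx.2
    have : 0 < h x - M := by rw [← hhR]; linarith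
    exact mul_pos this (Real.rpow_pos_of_pos hx.1 _)
  have hneg : ∀ x ∈ Ioi R, deriv F x < 0 := by
    intro x hx
    have hx0 : 0 < x := lt_trans hRpos hx
    rw [hid x hx0]
    have h1 : h x < h R := hAnti hRpos hx0 hx
    have : h x - M < 0 := by rw [← hhR]; linarith
    exact mul_neg_of_neg_of_pos this (Real.rpow_pos_of_pos hx0 _)
  refine ⟨R, hRpos, hderiv_iff, ?_, ?_⟩
  · exact strictMonoOn_of_deriv_pos (convex_Ioc 0 R) hFcont.continuousOn
      (fun x hx => hpos x (by rwa [interior_Ioc] at hx))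
  · exact strictAntiOn_of_deriv_neg (convex_Ici R) hFcont.continuousOn
      (fun x hx => hneg x (by rwa [interior_Ici] at hx))

theorem stmt4 (a b Γ β μ : ℝ) (ha : 0 < a) (hb : 0 < b) (hΓ : 0 < Γ) (hβ : 0 < β)
    (hμ : μ ∈ Set.Ioo (4 : ℝ) 6) :
    let g : ℝ → ℝ → ℝ := fun c r => a * r ^ 2 + b * r ^ 4 - Γ * c ^ β * r ^ μ
    -- (1) unique critical point on (0,∞), which is the strict global maximizer
    (∀ c : ℝ, 0 < c → ∃! R : ℝ, 0 < R ∧ deriv (g c) R = 0) ∧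
    (∀ c : ℝ, 0 < c → ∀ R : ℝ, 0 < R → deriv (g c) R = 0 →
      ∀ r : ℝ, 0 < r → r ≠ R → g c r < g c R) ∧
    -- (2) behavior of the level 3c²/2 for small masses
    (∃ cStar : ℝ, 0 < cStar ∧ ∀ c : ℝ, 0 < c → c < cStar →
      ∀ R : ℝ, 0 < R → deriv (g c) R = 0 →
        3 * c ^ 2 / 2 < g c R ∧
        ∃ R₀ R₁ : ℝ, 0 < R₀ ∧ R₀ < R ∧ R < R₁ ∧
          g c R₀ = 3 * c ^ 2 / 2 ∧ g c R₁ = 3 * c ^ 2 / 2 ∧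
          (∀ r : ℝ, 0 < r → g c r = 3 * c ^ 2 / 2 → r = R₀ ∨ r = R₁) ∧
          (∀ r : ℝ, 0 < r → (3 * c ^ 2 / 2 < g c r ↔ R₀ < r ∧ r < R₁))) := by
  intro g
  have main : ∀ c : ℝ, 0 < c → ∃ R : ℝ, 0 < R ∧
      (∀ x : ℝ, 0 < x → (deriv (g c) x = 0 ↔ x = R)) ∧
      StrictMonoOn (g c) (Set.Ioc 0 R) ∧ StrictAntiOn (g c) (Set.Ici R) := by
    intro c hc
    exact key_g a b (Γ * c ^ β) μ ha hb (by positivity) hμ.1 hμ.2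
  refine ⟨?_, ?_, ?_⟩
  · intro c hc
    obtain ⟨R, hR, hiff, -, -⟩ := main c hc
    exact ⟨R, ⟨hR, (hiff R hR).mpr rfl⟩, fun y ⟨hy, hdy⟩ => (hiff y hy).mp hdy⟩
  · intro c hc R hR hdR r hr hrR
    obtain ⟨R', hR', hiff, hmono, hanti⟩ := main c hc
    have hRR' : R = R' := (hiff R hR).mp hdR
    subst hRR'
    rcases lt_or_gt_of_ne hrR with h | h
    · exact hmono ⟨hr, h.le⟩ ⟨hR, le_rfl⟩ h
    · exact hanti (Set.mem_Ici.mpr le_rfl) h.le h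
  · refine ⟨min (((a+b)/(2*Γ)) ^ β⁻¹) (Real.sqrt ((a+b)/3)), ?_, ?_⟩
    · apply lt_min
      · exact Real.rpow_pos_of_pos (by positivity) _
      · exact Real.sqrt_pos.mpr (by positivity)
    intro c hc hcc R hR hdR
    have hK : Γ * c ^ β < (a+b)/2 := by
      have h1 : c < ((a+b)/(2*Γ)) ^ β⁻¹ := lt_of_lt_of_le hcc (min_le_left _ _)
      have h2 : c ^ β < (((a+b)/(2*Γ)) ^ β⁻¹) ^ β := Real.rpow_lt_rpow hc.le h1 hβ
      rw [Real.rpow_inv_rpow (by positivity) hβ.ne'] at h2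
      have : Γ * c ^ β < Γ * ((a+b)/(2*Γ)) := by
        exact (mul_lt_mul_iff_right₀ hΓ).mpr h2
      rw [show Γ * ((a+b)/(2*Γ)) = (a+b)/2 by field_simp] at this
      exact this
    have hc2 : 3 * c ^ 2 / 2 < (a+b)/2 := by
      have h1 : c < Real.sqrt ((a+b)/3) := lt_of_lt_of_le hcc (min_le_right _ _)
      have h2 : c ^ 2 < (a+b)/3 := (Real.lt_sqrt hc.le).mp h1
      linarith
    obtain ⟨R', hR', hiff, hmono, hanti⟩ := main c hc
    have hRR' : R = R' := (hiff R hR).mp hdR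
    subst hRR'
    have hmaxle : ∀ r : ℝ, 0 < r → g c r ≤ g c R := by
      intro r hr
      rcases lt_trichotomy r R with h | h | h
      · exact (hmono ⟨hr, h.le⟩ ⟨hR, le_rfl⟩ h).le
      · rw [h]
      · exact (hanti (Set.mem_Ici.mpr le_rfl) h.le h).le
    have hg1 : g c 1 = a + b - Γ * c ^ β := by
      simp [g, Real.one_rpow]
    have hgcont : Continuous (g c) := by
      have hμ1 : (1:ℝ) ≤ μ := by linarith [hμ.1]
      have : Differentiable ℝ (g c) := by
        intro x
        exact (((hasDerivAt_pow 2 x).const_mul a).add ((hasDerivAt_pow 4 x).const_mul b)).sub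
          ((Real.hasDerivAt_rpow_const (Or.inr hμ1)).const_mul (Γ * c ^ β)) |>.differentiableAt
      exact this.continuous
    set L : ℝ := 3 * c ^ 2 / 2 with hLdef
    have hL0 : 0 < L := by positivity
    have hLM : L < g c R := by
      have h1 : L < g c 1 := by rw [hg1]; linarith
      exact lt_of_lt_of_le h1 (hmaxle 1 one_pos)
    refine ⟨hLM, ?_⟩
    have hg0 : g c 0 = 0 := by
      simp [g, Real.zero_rpow (show μ ≠ 0 by linarith [hμ.1])]
    -- R₀
    obtain ⟨R₀, hR₀mem, hgR₀⟩ : ∃ x ∈ Set.Ioo (0:ℝ) R, g c x = L := by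
      have := intermediate_value_Ioo (le_of_lt hR) hgcont.continuousOn (a := 0) (b := R)
      obtain ⟨x, hx, hgx⟩ := this (show L ∈ Set.Ioo (g c 0) (g c R) by rw [hg0]; exact ⟨hL0, hLM⟩)
      exact ⟨x, hx, hgx⟩
    -- x₂ with g c x₂ < 0
    have hμ4' : (0:ℝ) < μ - 4 := by linarith [hμ.1]
    set K : ℝ := Γ * c ^ β with hKdef
    have hKpos : 0 < K := by positivity
    set t : ℝ := (2*(a+b)/K) ^ (μ-4)⁻¹ with htdef
    have ht0 : 0 ≤ t := Real.rpow_nonneg (by positivity) _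
    set x₂ : ℝ := max (max 1 (R+1)) (t+1) with hx₂def
    have hx₂1 : (1:ℝ) ≤ x₂ := le_trans (le_max_left _ _) (le_max_left _ _)
    have hx₂0 : 0 < x₂ := lt_of_lt_of_le one_pos hx₂1
    have hx₂R : R < x₂ := by
      have := le_trans (le_max_right 1 (R+1)) (le_max_left (max 1 (R+1)) (t+1))
      linarith
    have hgx₂ : g c x₂ < 0 := by
      have htx : t < x₂ := lt_of_lt_of_le (by linarith) (le_max_right _ _)
      have h1 : t ^ (μ-4) < x₂ ^ (μ-4) := Real.rpow_lt_rpow ht0 htx hμ4'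
      have h2 : t ^ (μ-4) = 2*(a+b)/K := by
        rw [htdef, Real.rpow_inv_rpow (by positivity) hμ4'.ne']
      have h3 : 2*(a+b) < K * x₂ ^ (μ-4) := by
        rw [h2, div_lt_iff₀ hKpos] at h1
        linarith [h1]
      have h4 : x₂ ^ μ = x₂ ^ 4 * x₂ ^ (μ-4) := by
        rw [show x₂ ^ (4:ℕ) = x₂ ^ ((4:ℕ):ℝ) from (Real.rpow_natCast x₂ 4).symm,
          ← Real.rpow_add hx₂0]
        norm_num
      have h5 : x₂ ^ 2 ≤ x₂ ^ 4 := pow_le_pow_right₀ hx₂1 (by norm_num)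
      have h6 : (0:ℝ) < x₂ ^ 4 := by positivity
      have : g c x₂ = a * x₂ ^ 2 + b * x₂ ^ 4 - K * (x₂ ^ 4 * x₂ ^ (μ-4)) := by
        rw [show g c x₂ = a * x₂ ^ 2 + b * x₂ ^ 4 - K * x₂ ^ μ from rfl, h4]
      rw [this]
      nlinarith [h3, h5, h6]
    -- R₁
    obtain ⟨R₁, hR₁mem, hgR₁⟩ : ∃ x ∈ Set.Ioo R x₂, g c x = L := by
      have := intermediate_value_Ioo' hx₂R.le hgcont.continuousOn (a := R) (b := x₂)
      obtain ⟨x, hx, hgx⟩ := this (show L ∈ Set.Ioo (g c x₂) (g c R) from ⟨by linarith, hLM⟩)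
      exact ⟨x, hx, hgx⟩
    have hR₀Ioc : R₀ ∈ Set.Ioc (0:ℝ) R := ⟨hR₀mem.1, hR₀mem.2.le⟩
    have hR₁Ici : R₁ ∈ Set.Ici R := hR₁mem.1.le
    refine ⟨R₀, R₁, hR₀mem.1, hR₀mem.2, hR₁mem.1, hgR₀, hgR₁, ?_, ?_⟩
    · intro r hr hgr
      rcases le_or_gt r R with h | h
      · left
        exact hmono.injOn ⟨hr, h⟩ hR₀Ioc (by rw [hgr, hgR₀])
      · right
        exact hanti.injOn h.le hR₁Ici (by rw [hgr, hgR₁])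
    · intro r hr
      constructor
      · intro hgr
        constructor
        · by_contra hcon
          push_neg at hcon
          have hrIoc : r ∈ Set.Ioc (0:ℝ) R := ⟨hr, le_trans hcon hR₀Ioc.2⟩
          rcases eq_or_lt_of_le hcon with h | h
          · rw [h, hgR₀] at hgr; exact lt_irrefl L hgr
          · have := hmono hrIoc hR₀Ioc h
            rw [hgR₀] at this; linarith
        · by_contra hcon
          push_neg at hcon
          have hrIci : r ∈ Set.Ici R := le_trans hR₁Ici hcon
          rcases eq_or_lt_of_le hcon with h | h
          · rw [← h, hgR₁] at hgr; exact lt_irrefl L hgr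
          · have := hanti hR₁Ici hrIci h
            rw [hgR₁] at this; linarith
      · rintro ⟨h1, h2⟩
        rcases le_or_gt r R with h | h
        · have := hmono hR₀Ioc ⟨hr, h⟩ h1
          rw [hgR₀] at this; linarith
        · have := hanti (Set.mem_Ici.mpr h.le) hR₁Ici h2
          rw [hgR₁] at this; linarith
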